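/- Let μ be a probability measure on ℝ with compact support and let ᾱ ∈ (0,1). Define p(x) = ∫ gauss(√ᾱ·y, 1−ᾱ, x) dμ(y). Then for every x ∈ ℝ: p(x) > 0, p is differentiable at x, and p'(x)/p(x) = −x/(1−ᾱ) + (√ᾱ/(1−ᾱ)) · (∫ y · gauss(√ᾱ·y, 1−ᾱ, x) dμ(y)) / p(x). -/

import Mathlib

open MeasureTheory

/-- Density at `x` of the one-dimensional normal distribution with mean `m`
and variance `v`: `gauss(m, v, x) = (2πv)^(−1/2) · exp(−(x − m)²/(2v))`. -/
noncomputable def gauss (m v x : ℝ) : ℝ :=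
  (Real.sqrt (2 * Real.pi * v))⁻¹ * Real.exp (-(x - m) ^ 2 / (2 * v))

/-- The smoothed density `p(x) = ∫ gauss(√ᾱ·y, 1−ᾱ, x) dμ(y)`. -/
noncomputable def smoothedDensity (μ : Measure ℝ) (α : ℝ) (x : ℝ) : ℝ :=
  ∫ y, gauss (Real.sqrt α * y) (1 - α) x ∂μ

/-!
Differentiate under the integral sign. The `x`-derivative `-(x - m) / v * gauss m v x` of the
kernel is bounded uniformly in the mean `m`, since `|t| * exp (-t ^ 2 / (2 * v)) ≤ √v`, so
dominated convergence applies for any finite mixing measure. Splitting `x - √ᾱ y` then gives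
`p' x = -x / (1 - ᾱ) * p x + √ᾱ / (1 - ᾱ) * ∫ y * gauss (√ᾱ y) (1 - ᾱ) x dμ(y)`.
-/

open Real

lemma gauss_pos (m : ℝ) {v : ℝ} (hv : 0 < v) (x : ℝ) : 0 < gauss m v x := by
  unfold gauss; positivity

lemma gauss_le (m : ℝ) {v : ℝ} (hv : 0 < v) (x : ℝ) : gauss m v x ≤ (√(2 * π * v))⁻¹ := by
  refine mul_le_of_le_one_right (by positivity) (exp_le_one_iff.2 ?_)
  exact div_nonpos_of_nonpos_of_nonneg (neg_nonpos.2 (sq_nonneg _)) (by positivity)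

lemma abs_mul_exp_neg_sq_div_le_sqrt (t : ℝ) {v : ℝ} (hv : 0 < v) :
    |t| * exp (-t ^ 2 / (2 * v)) ≤ √v := by
  have hsqrt : 0 < √v := sqrt_pos.2 hv
  -- with `u = |t| / √v`: `u ≤ 1 + u ^ 2 / 2 ≤ exp (u ^ 2 / 2)`
  have hu : |t| / √v ≤ t ^ 2 / (2 * v) + 1 := by
    have : t ^ 2 / (2 * v) = (|t| / √v) ^ 2 / 2 := by
      rw [div_pow, sq_abs, sq_sqrt hv.le]; ring
    rw [this]; nlinarith [sq_nonneg (|t| / √v - 1)]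
  have key : |t| ≤ √v * exp (t ^ 2 / (2 * v)) := by
    rw [div_le_iff₀ hsqrt] at hu
    nlinarith [add_one_le_exp (t ^ 2 / (2 * v))]
  calc |t| * exp (-t ^ 2 / (2 * v)) ≤ √v * exp (t ^ 2 / (2 * v)) * exp (-t ^ 2 / (2 * v)) := by
        gcongr
    _ = √v := by rw [mul_assoc, ← exp_add, neg_div, add_neg_cancel, exp_zero, mul_one]

lemma abs_sub_mul_gauss_le (m : ℝ) {v : ℝ} (hv : 0 < v) (x : ℝ) :
    |x - m| * gauss m v x ≤ (√(2 * π * v))⁻¹ * √v := by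
  unfold gauss
  rw [mul_left_comm]
  exact mul_le_mul_of_nonneg_left (abs_mul_exp_neg_sq_div_le_sqrt (x - m) hv) (by positivity)

lemma hasDerivAt_gauss (m : ℝ) {v : ℝ} (hv : 0 < v) (x : ℝ) :
    HasDerivAt (gauss m v) (-(x - m) / v * gauss m v x) x := by
  have hexp : HasDerivAt (fun x : ℝ => -(x - m) ^ 2 / (2 * v)) (-(x - m) / v) x :=
    ((((hasDerivAt_id' x).sub_const m).pow 2).neg.div_const (2 * v)).congr_deriv (by
      field_simp; ring)
  have hgauss : HasDerivAt (gauss m v) _ x := hexp.exp.const_mul (√(2 * π * v))⁻¹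
  exact hgauss.congr_deriv (by unfold gauss; ring)

@[fun_prop]
lemma measurable_gauss_mean (v x : ℝ) : Measurable fun m => gauss m v x := by
  unfold gauss; fun_prop

section Mixture

variable {Ω : Type*} [MeasurableSpace Ω] (μ : Measure Ω) [IsFiniteMeasure μ] {m : Ω → ℝ} {v : ℝ}

lemma integrable_gauss_comp (hm : Measurable m) (hv : 0 < v) (x : ℝ) :
    Integrable (fun ω => gauss (m ω) v x) μ := by
  refine .of_bound ((measurable_gauss_mean v x).comp hm).aestronglyMeasurable (√(2 * π * v))⁻¹ ?_
  filter_upwards with ω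
  rw [Real.norm_of_nonneg (gauss_pos _ hv _).le]
  exact gauss_le _ hv _

lemma integrable_sub_mul_gauss_comp (hm : Measurable m) (hv : 0 < v) (x : ℝ) :
    Integrable (fun ω => (x - m ω) * gauss (m ω) v x) μ := by
  refine .of_bound (by fun_prop) ((√(2 * π * v))⁻¹ * √v) ?_
  filter_upwards with ω
  rw [norm_mul, Real.norm_eq_abs, Real.norm_of_nonneg (gauss_pos _ hv _).le]
  exact abs_sub_mul_gauss_le _ hv _

lemma integral_gauss_comp_pos [NeZero μ] (hm : Measurable m) (hv : 0 < v) (x : ℝ) :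
    0 < ∫ ω, gauss (m ω) v x ∂μ := by
  rw [integral_pos_iff_support_of_nonneg (fun ω => (gauss_pos _ hv _).le)
    (integrable_gauss_comp μ hm hv x)]
  have : Function.support (fun ω => gauss (m ω) v x) = Set.univ :=
    Function.support_eq_univ fun ω => (gauss_pos _ hv _).ne'
  rw [this]
  exact Measure.measure_univ_pos.2 (NeZero.ne μ)

lemma hasDerivAt_integral_gauss_comp (hm : Measurable m) (hv : 0 < v) (x : ℝ) :
    HasDerivAt (fun x => ∫ ω, gauss (m ω) v x ∂μ)
      (∫ ω, -(x - m ω) / v * gauss (m ω) v x ∂μ) x := by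
  have hbound : ∀ x' ω, ‖-(x' - m ω) / v * gauss (m ω) v x'‖ ≤ (√(2 * π * v))⁻¹ * √v / v := by
    intro x' ω
    rw [norm_mul, norm_div, norm_neg, Real.norm_eq_abs, Real.norm_eq_abs, abs_of_pos hv,
      Real.norm_of_nonneg (gauss_pos _ hv _).le, div_mul_eq_mul_div]
    exact div_le_div_of_nonneg_right (abs_sub_mul_gauss_le _ hv _) hv.le
  refine (hasDerivAt_integral_of_dominated_loc_of_deriv_le Filter.univ_mem
    (.of_forall fun x' => (integrable_gauss_comp μ hm hv x').aestronglyMeasurable)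
    (integrable_gauss_comp μ hm hv x) ?_ (.of_forall fun ω x' _ => hbound x' ω)
    (integrable_const _) (.of_forall fun ω x' _ => hasDerivAt_gauss _ hv x')).2
  fun_prop

end Mixture

lemma integrable_mul_gauss_const_mul (μ : Measure ℝ) [IsFiniteMeasure μ] {a v : ℝ} (ha : a ≠ 0)
    (hv : 0 < v) (x : ℝ) : Integrable (fun y => y * gauss (a * y) v x) μ := by
  have hm : Measurable fun y : ℝ => a * y := by fun_prop
  -- `y = (x - (x - a * y)) / a`
  have h := ((integrable_gauss_comp μ hm hv x).const_mul x).sub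
    (integrable_sub_mul_gauss_comp μ hm hv x)
  refine (h.div_const a).congr (.of_forall fun y => ?_)
  simp only [Pi.sub_apply]
  field_simp
  ring

lemma hasDerivAt_smoothedDensity (μ : Measure ℝ) [IsFiniteMeasure μ] {α : ℝ} (hα0 : 0 < α)
    (hα1 : α < 1) (x : ℝ) :
    HasDerivAt (smoothedDensity μ α)
      (-x / (1 - α) * smoothedDensity μ α x +
        √α / (1 - α) * ∫ y, y * gauss (√α * y) (1 - α) x ∂μ) x := by
  have hv : 0 < 1 - α := sub_pos.2 hα1
  have hm : Measurable fun y : ℝ => √α * y := by fun_prop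
  refine (hasDerivAt_integral_gauss_comp μ hm hv x).congr_deriv ?_
  rw [smoothedDensity, ← integral_const_mul, ← integral_const_mul, ← integral_add
    ((integrable_gauss_comp μ hm hv x).const_mul _)
    ((integrable_mul_gauss_const_mul μ (sqrt_pos.2 hα0).ne' hv x).const_mul _)]
  congr 1 with y
  field_simp
  ring

theorem score_of_smoothed_density_general
    (μ : Measure ℝ) [IsProbabilityMeasure μ]
    (α : ℝ) (hα0 : 0 < α) (hα1 : α < 1) (x : ℝ) :
    0 < smoothedDensity μ α x ∧
      DifferentiableAt ℝ (smoothedDensity μ α) x ∧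
      deriv (smoothedDensity μ α) x / smoothedDensity μ α x =
        -x / (1 - α) + (Real.sqrt α / (1 - α)) *
          (∫ y, y * gauss (Real.sqrt α * y) (1 - α) x ∂μ) / smoothedDensity μ α x := by
  have hp : 0 < smoothedDensity μ α x := integral_gauss_comp_pos μ (by fun_prop) (by linarith) x
  have hderiv := hasDerivAt_smoothedDensity μ hα0 hα1 x
  refine ⟨hp, hderiv.differentiableAt, ?_⟩
  rw [hderiv.deriv]
  field_simp

/-- for a compactly supported probability measure `μ` on `ℝ` and
`ᾱ ∈ (0,1)`, the smoothed density `p` is positive and differentiable everywhere, and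
its score satisfies
`p'(x)/p(x) = −x/(1−ᾱ) + (√ᾱ/(1−ᾱ)) · (∫ y · gauss(√ᾱy, 1−ᾱ, x) dμ(y)) / p(x)`. -/
theorem score_of_smoothed_density
    (μ : Measure ℝ) [IsProbabilityMeasure μ]
    (hsupp : ∃ s : Set ℝ, IsCompact s ∧ μ sᶜ = 0)
    (α : ℝ) (hα0 : 0 < α) (hα1 : α < 1) (x : ℝ) :
    0 < smoothedDensity μ α x ∧
      DifferentiableAt ℝ (smoothedDensity μ α) x ∧
      deriv (smoothedDensity μ α) x / smoothedDensity μ α x =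
        -x / (1 - α) + (Real.sqrt α / (1 - α)) *
          (∫ y, y * gauss (Real.sqrt α * y) (1 - α) x ∂μ) / smoothedDensity μ α x :=
  score_of_smoothed_density_general μ α hα0 hα1 x
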